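/- arXiv:math-ph/0610016 — 2 statements merged into one kernel-verified Lean document; each statement's English description precedes it below -/
import Mathlib

section
/- If v : ℝ² → ℝ is integrable and its Radon transform vanishes identically, i.e. ∫_{-∞}^{∞} v(tω + y) dt = 0 for every unit vector ω and every y orthogonal to ω, then v = 0 almost everywhere. -/
open MeasureTheory
open scoped RealInnerProductSpace

open scoped FourierTransform
open Complex

namespace RadonAux

local notation "E2" => EuclideanSpace ℝ (Fin 2)

noncomputable def psi (b : OrthonormalBasis (Fin 2) ℝ (EuclideanSpace ℝ (Fin 2))) :
    ℝ × ℝ → EuclideanSpace ℝ (Fin 2) :=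
  fun q => b.repr.symm ((MeasurableEquiv.toLp 2 (Fin 2 → ℝ))
    (MeasurableEquiv.finTwoArrow.symm q))

lemma psi_eq (b : OrthonormalBasis (Fin 2) ℝ (EuclideanSpace ℝ (Fin 2))) (q : ℝ × ℝ) :
    psi b q = q.1 • b 0 + q.2 • b 1 := by
  have h : ((MeasurableEquiv.toLp 2 (Fin 2 → ℝ))
      (MeasurableEquiv.finTwoArrow.symm q) : EuclideanSpace ℝ (Fin 2)) =
      (WithLp.equiv 2 (Fin 2 → ℝ)).symm ![q.1, q.2] := by
    rfl
  rw [psi, h, ← b.sum_repr_symm]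
  simp [Fin.sum_univ_two]

lemma measurePreserving_psi (b : OrthonormalBasis (Fin 2) ℝ (EuclideanSpace ℝ (Fin 2))) :
    MeasurePreserving (psi b) volume volume ∧ MeasurableEmbedding (psi b) := by
  have m1 : MeasurePreserving (MeasurableEquiv.finTwoArrow.symm :
      ℝ × ℝ → (Fin 2 → ℝ)) volume volume := (volume_preserving_finTwoArrow ℝ).symm
  have m2 : MeasurePreserving ((MeasurableEquiv.toLp 2 (Fin 2 → ℝ)))
      volume volume := (EuclideanSpace.volume_preserving_symm_measurableEquiv_toLp (Fin 2)).symm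
  have m3 : MeasurePreserving (b.repr.symm) volume volume :=
    b.measurePreserving_repr_symm
  constructor
  · exact (m3.comp m2).comp m1
  · exact ((b.repr.symm.toHomeomorph.measurableEmbedding).comp
      ((MeasurableEquiv.toLp 2 (Fin 2 → ℝ)).measurableEmbedding)).comp
      (MeasurableEquiv.finTwoArrow.symm.measurableEmbedding)

/-- Integral over `EuclideanSpace ℝ (Fin 2)` in orthonormal coordinates. -/
lemma integral_onb {F : Type*} [NormedAddCommGroup F] [NormedSpace ℝ F]
    (b : OrthonormalBasis (Fin 2) ℝ (EuclideanSpace ℝ (Fin 2)))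
    (f : EuclideanSpace ℝ (Fin 2) → F) :
    ∫ x, f x = ∫ q : ℝ × ℝ, f (q.1 • b 0 + q.2 • b 1) := by
  have key := measurePreserving_psi b
  rw [← key.1.integral_comp key.2 f]
  congr 1
  ext q
  simp [Function.comp, psi_eq]

/-- Integrability transfer along `psi`. -/
lemma integrable_comp_onb {F : Type*} [NormedAddCommGroup F]
    (b : OrthonormalBasis (Fin 2) ℝ (EuclideanSpace ℝ (Fin 2)))
    {f : EuclideanSpace ℝ (Fin 2) → F} (hf : Integrable f) :
    Integrable (fun q : ℝ × ℝ => f (q.1 • b 0 + q.2 • b 1)) := by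
  have key := measurePreserving_psi b
  have : Integrable (f ∘ psi b) := (key.1.integrable_comp_emb key.2).2 hf
  apply this.congr
  filter_upwards with q
  simp [Function.comp, psi_eq]

/-- Existence of an adapted orthonormal pair. -/
lemma exists_pair (ξ : EuclideanSpace ℝ (Fin 2)) :
    ∃ ω η : EuclideanSpace ℝ (Fin 2), ‖ω‖ = 1 ∧ ‖η‖ = 1 ∧ ⟪ω, η⟫ = 0 ∧ ⟪ω, ξ⟫ = 0 := by
  rcases eq_or_ne ξ 0 with h0 | h0
  · refine ⟨EuclideanSpace.single 0 1, EuclideanSpace.single 1 1, ?_, ?_, ?_, ?_⟩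
    · simp [EuclideanSpace.norm_single]
    · simp [EuclideanSpace.norm_single]
    · simp [EuclideanSpace.inner_single_left, EuclideanSpace.single_apply]
    · simp [h0]
  · set σ : EuclideanSpace ℝ (Fin 2) := (WithLp.equiv 2 (Fin 2 → ℝ)).symm ![-ξ 1, ξ 0] with hσ
    have hσ0 : σ 0 = -ξ 1 := rfl
    have hσ1 : σ 1 = ξ 0 := rfl
    have hnσ : ‖σ‖ = ‖ξ‖ := by
      rw [EuclideanSpace.norm_eq, EuclideanSpace.norm_eq]
      congr 1
      rw [Fin.sum_univ_two, Fin.sum_univ_two, hσ0, hσ1, norm_neg]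
      ring
    have hσne : σ ≠ 0 := by
      intro h
      rw [h, norm_zero] at hnσ
      exact h0 (norm_eq_zero.mp hnσ.symm)
    refine ⟨‖σ‖⁻¹ • σ, ‖ξ‖⁻¹ • ξ, norm_smul_inv_norm hσne, norm_smul_inv_norm h0, ?_, ?_⟩
    · rw [real_inner_smul_left, real_inner_smul_right]
      have : ⟪σ, ξ⟫ = 0 := by
        rw [PiLp.inner_apply, Fin.sum_univ_two]
        simp [hσ0, hσ1]
        ring
      rw [this]
      ring
    · rw [real_inner_smul_left]
      have : ⟪σ, ξ⟫ = 0 := by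
        rw [PiLp.inner_apply, Fin.sum_univ_two]
        simp [hσ0, hσ1]
        ring
      rw [this]
      ring

/-- The Fourier transform of the complexification vanishes. -/
lemma fourier_zero (v : EuclideanSpace ℝ (Fin 2) → ℝ) (hv : Integrable v)
    (hzero : ∀ (ω y : EuclideanSpace ℝ (Fin 2)), ‖ω‖ = 1 → ⟪y, ω⟫ = 0 →
      (∫ t : ℝ, v (t • ω + y)) = 0) (ξ : EuclideanSpace ℝ (Fin 2)) :
    𝓕 (fun x => (v x : ℂ)) ξ = 0 := by
  obtain ⟨ω, η, hω, hη, hωη, hωξ⟩ := exists_pair ξ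
  -- orthonormal basis with b 0 = η, b 1 = ω
  have hηη : ⟪η, η⟫ = 1 := by rw [real_inner_self_eq_norm_mul_norm, hη]; norm_num
  have hωω : ⟪ω, ω⟫ = 1 := by rw [real_inner_self_eq_norm_mul_norm, hω]; norm_num
  have hηω : ⟪η, ω⟫ = 0 := by rw [real_inner_comm]; exact hωη
  have hon : Orthonormal ℝ ![η, ω] := by
    rw [orthonormal_iff_ite]
    intro i j
    fin_cases i <;> fin_cases j
    · simpa using hηη
    · simpa using hηω
    · simpa using hωη
    · simpa using hωω
  have hcard : Fintype.card (Fin 2) = Module.finrank ℝ (EuclideanSpace ℝ (Fin 2)) := by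
    simp [finrank_euclideanSpace]
  set B := basisOfOrthonormalOfCardEqFinrank hon hcard with hB
  have hBcoe : ⇑B = ![η, ω] := coe_basisOfOrthonormalOfCardEqFinrank hon hcard
  set b := B.toOrthonormalBasis (by rwa [hBcoe]) with hb
  have hb0 : b 0 = η := by rw [hb, Module.Basis.coe_toOrthonormalBasis, hBcoe]; rfl
  have hb1 : b 1 = ω := by rw [hb, Module.Basis.coe_toOrthonormalBasis, hBcoe]; rfl
  set W : EuclideanSpace ℝ (Fin 2) → ℂ := fun x => (v x : ℂ) with hW
  have hWint : Integrable W := hv.ofReal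
  rw [Real.fourier_eq]
  rw [integral_onb b (fun x => 𝐞 (-⟪x, ξ⟫) • W x)]
  rw [hb0, hb1]
  have hint : Integrable (fun q : ℝ × ℝ => 𝐞 (-⟪q.1 • η + q.2 • ω, ξ⟫) • W (q.1 • η + q.2 • ω)) := by
    have := integrable_comp_onb b (f := fun x => 𝐞 (-⟪x, ξ⟫) • W x)
      ((Real.fourierIntegral_convergent_iff ξ).2 hWint)
    rwa [hb0, hb1] at this
  rw [MeasureTheory.Measure.volume_eq_prod]
  rw [MeasureTheory.integral_prod _ (by rwa [← MeasureTheory.Measure.volume_eq_prod])]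
  have inner_eq : ∀ s t : ℝ, ⟪s • η + t • ω, ξ⟫ = s * ⟪η, ξ⟫ := by
    intro s t
    rw [inner_add_left, real_inner_smul_left, real_inner_smul_left, hωξ]
    ring
  have hinner : ∀ s : ℝ, (∫ t : ℝ, 𝐞 (-⟪s • η + t • ω, ξ⟫) • W (s • η + t • ω)) = 0 := by
    intro s
    have : (fun t : ℝ => 𝐞 (-⟪s • η + t • ω, ξ⟫) • W (s • η + t • ω)) =
        fun t : ℝ => 𝐞 (-(s * ⟪η, ξ⟫)) • W (t • ω + s • η) := by
      funext t
      rw [inner_eq s t, add_comm (s • η) (t • ω)]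
    rw [this]
    simp only [Circle.smul_def]
    rw [integral_smul]
    have : (∫ t : ℝ, W (t • ω + s • η)) = ((∫ t : ℝ, v (t • ω + s • η) : ℝ) : ℂ) := by
      simp only [hW]
      exact integral_ofReal
    rw [this, hzero ω (s • η) hω (by rw [real_inner_smul_left, real_inner_comm, hωη]; ring),
      Complex.ofReal_zero, smul_zero]
  simp only [hinner, integral_zero]

/-- Complex-valued Schwartz function from a smooth compactly supported real function. -/
noncomputable def toSchwartz (g : EuclideanSpace ℝ (Fin 2) → ℝ) (hg : ContDiff ℝ ((⊤ : ℕ∞) : WithTop ℕ∞) g)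
    (hsupp : HasCompactSupport g) : SchwartzMap (EuclideanSpace ℝ (Fin 2)) ℂ where
  toFun x := (g x : ℂ)
  smooth' := by exact Complex.ofRealCLM.contDiff.comp (hg.of_le (by exact_mod_cast le_top))
  decay' := by
    intro k n
    have hnorm : ∀ x, ‖iteratedFDeriv ℝ n (fun x => (g x : ℂ)) x‖ =
        ‖iteratedFDeriv ℝ n g x‖ := by
      intro x
      exact (Complex.ofRealLI : ℝ →ₗᵢ[ℝ] ℂ).norm_iteratedFDeriv_comp_left hg.contDiffAt (by exact_mod_cast le_top)
    set F : EuclideanSpace ℝ (Fin 2) → ℝ := fun x => ‖x‖ ^ k * ‖iteratedFDeriv ℝ n g x‖ with hF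
    have hFsupp : HasCompactSupport F := by
      apply HasCompactSupport.mul_left
      exact (hsupp.iteratedFDeriv n).norm
    have hFcont : Continuous F := by
      apply Continuous.mul
      · exact (continuous_norm.pow k)
      · exact (hg.continuous_iteratedFDeriv (by exact_mod_cast le_top)).norm
    obtain ⟨C, hC⟩ := hFsupp.exists_bound_of_continuous hFcont
    refine ⟨C, fun x => ?_⟩
    rw [hnorm x]
    calc ‖x‖ ^ k * ‖iteratedFDeriv ℝ n g x‖ = F x := rfl
      _ ≤ ‖F x‖ := le_abs_self _
      _ ≤ C := hC x

lemma innerl_flip : (innerₗ (EuclideanSpace ℝ (Fin 2))).flip =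
    innerₗ (EuclideanSpace ℝ (Fin 2)) := by
  apply LinearMap.ext; intro x; apply LinearMap.ext; intro y
  simp only [LinearMap.flip_apply, innerₗ_apply_apply]
  exact real_inner_comm x y

end RadonAux

theorem stmt_4 (v : EuclideanSpace ℝ (Fin 2) → ℝ) (hv : Integrable v)
    (hzero : ∀ (ω y : EuclideanSpace ℝ (Fin 2)), ‖ω‖ = 1 → ⟪y, ω⟫ = 0 →
      (∫ t : ℝ, v (t • ω + y)) = 0) :
    v =ᵐ[volume] 0 := by
  have hF := RadonAux.fourier_zero v hv hzero
  have main : ∀ (g : EuclideanSpace ℝ (Fin 2) → ℝ), ContDiff ℝ ((⊤ : ℕ∞) : WithTop ℕ∞) g → HasCompactSupport g →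
      ∫ x, g x • v x = 0 := by
    intro g hgsmooth hgsupp
    set G := RadonAux.toSchwartz g hgsmooth hgsupp with hG
    set h := (FourierTransform.fourierCLE ℂ (SchwartzMap (EuclideanSpace ℝ (Fin 2)) ℂ)).symm G with hh
    have hFh : 𝓕 ⇑h = ⇑G := by
      have h1 : (FourierTransform.fourierCLE ℂ (SchwartzMap (EuclideanSpace ℝ (Fin 2)) ℂ)) h = G :=
        (FourierTransform.fourierCLE ℂ (SchwartzMap (EuclideanSpace ℝ (Fin 2)) ℂ)).apply_symm_apply G
      calc 𝓕 ⇑h = ⇑((FourierTransform.fourierCLE ℂ (SchwartzMap (EuclideanSpace ℝ (Fin 2)) ℂ)) h) := by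
            rw [FourierTransform.fourierCLE_apply, SchwartzMap.fourier_coe]
        _ = ⇑G := by rw [h1]
    set W : EuclideanSpace ℝ (Fin 2) → ℂ := fun x => (v x : ℂ) with hW
    have hWint : Integrable W := hv.ofReal
    have key := VectorFourier.integral_fourierIntegral_smul_eq_flip
      (L := innerₗ (EuclideanSpace ℝ (Fin 2))) (f := W) (g := ⇑h)
      (μ := volume) (ν := volume)
      Real.continuous_fourierChar continuous_inner hWint (h.integrable (μ := volume))
    rw [RadonAux.innerl_flip] at key
    have hL : (∫ ξ, (VectorFourier.fourierIntegral Real.fourierChar volume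
        (innerₗ (EuclideanSpace ℝ (Fin 2))) W ξ) • (h ξ)) = 0 := by
      have : ∀ ξ, (VectorFourier.fourierIntegral Real.fourierChar volume
          (innerₗ (EuclideanSpace ℝ (Fin 2))) W ξ) = 0 := fun ξ => hF ξ
      simp [this]
    rw [hL] at key
    have hR : (∫ x, W x • (VectorFourier.fourierIntegral Real.fourierChar volume
        (innerₗ (EuclideanSpace ℝ (Fin 2))) (⇑h) x)) =
        ((∫ x, v x * g x : ℝ) : ℂ) := by
      have : ∀ x, (VectorFourier.fourierIntegral Real.fourierChar volume
          (innerₗ (EuclideanSpace ℝ (Fin 2))) (⇑h) x) = G x := fun x => congrFun hFh x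
      simp only [this]
      have : (fun x => W x • G x) = fun x => ((v x * g x : ℝ) : ℂ) := by
        funext x
        show (v x : ℂ) • ((g x : ℝ) : ℂ) = ((v x * g x : ℝ) : ℂ)
        rw [smul_eq_mul, ← Complex.ofReal_mul]
      rw [this]
      exact integral_ofReal
    rw [hR] at key
    have : (∫ x, v x * g x) = 0 := by
      exact_mod_cast key.symm
    rw [← this]
    congr 1
    funext x
    rw [smul_eq_mul, mul_comm]
  have := ae_eq_zero_of_integral_contDiff_smul_eq_zero (hv.locallyIntegrable) main
  filter_upwards [this] with x hx
  exact hx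
end

section
/- For a homogeneous function V of order −ρ with 1/2 < ρ < 1, smooth on ℝ^d \ {0} and with |V(x)| ≤ C|x|^{-ρ}, the function t ↦ V(y+tω) − V(tω) is integrable on ℝ for every unit vector ω and every nonzero y orthogonal to ω; in particular Φ(y,ω;V) is well defined. -/
open MeasureTheory Set

variable {d : ℕ} {ρ : ℝ} {V : EuclideanSpace ℝ (Fin d) → ℝ}

lemma Vdiff (hV : ContDiffOn ℝ (⊤ : ℕ∞) V {0}ᶜ) {x : EuclideanSpace ℝ (Fin d)} (hx : x ≠ 0) :
    DifferentiableAt ℝ V x := by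
  have := (hV.contDiffAt (isOpen_compl_singleton.mem_nhds hx))
  exact this.differentiableAt (by simp)

lemma sphere_sub_compl : (Metric.sphere (0 : EuclideanSpace ℝ (Fin d)) 1) ⊆ {0}ᶜ := by
  intro u hu
  simp only [Set.mem_compl_iff, Set.mem_singleton_iff]
  rintro rfl
  rw [mem_sphere_iff_norm, sub_zero, norm_zero] at hu
  exact one_ne_zero hu.symm

lemma Vbound (hV : ContDiffOn ℝ (⊤ : ℕ∞) V {0}ᶜ)
    (hhom : ∀ t : ℝ, 0 < t → ∀ x : EuclideanSpace ℝ (Fin d), x ≠ 0 →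
      V (t • x) = t ^ (-ρ) * V x) :
    ∃ C : ℝ, 0 ≤ C ∧ ∀ x : EuclideanSpace ℝ (Fin d), x ≠ 0 → |V x| ≤ C * ‖x‖ ^ (-ρ) := by
  obtain ⟨C, hC⟩ := (isCompact_sphere (0 : EuclideanSpace ℝ (Fin d)) 1).exists_bound_of_continuousOn
    (hV.continuousOn.mono sphere_sub_compl)
  refine ⟨max C 0, le_max_right _ _, fun x hx => ?_⟩
  have hnx : (0:ℝ) < ‖x‖ := norm_pos_iff.2 hx
  set u := ‖x‖⁻¹ • x with hu
  have hun : u ∈ Metric.sphere (0 : EuclideanSpace ℝ (Fin d)) 1 := by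
    rw [mem_sphere_iff_norm, sub_zero, norm_smul]
    simp [abs_of_pos (inv_pos.2 hnx), inv_mul_cancel₀ hnx.ne']
  have hune : u ≠ 0 := fun h => (sphere_sub_compl hun) h
  have hxu : x = ‖x‖ • u := by rw [hu, smul_smul, mul_inv_cancel₀ hnx.ne', one_smul]
  have hVx : V x = ‖x‖ ^ (-ρ) * V u := by
    conv_lhs => rw [hxu]
    exact hhom _ hnx u hune
  calc |V x| = ‖x‖ ^ (-ρ) * |V u| := by
        rw [hVx, abs_mul, abs_of_pos (Real.rpow_pos_of_pos hnx _)]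
    _ ≤ ‖x‖ ^ (-ρ) * max C 0 := by
        apply mul_le_mul_of_nonneg_left _ (Real.rpow_pos_of_pos hnx _).le
        exact le_trans (hC u hun) (le_max_left _ _)
    _ = max C 0 * ‖x‖ ^ (-ρ) := mul_comm _ _

lemma fderiv_scale (hV : ContDiffOn ℝ (⊤ : ℕ∞) V {0}ᶜ)
    (hhom : ∀ t : ℝ, 0 < t → ∀ x : EuclideanSpace ℝ (Fin d), x ≠ 0 →
      V (t • x) = t ^ (-ρ) * V x)
    {t : ℝ} (ht : 0 < t) {x : EuclideanSpace ℝ (Fin d)} (hx : x ≠ 0) :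
    fderiv ℝ V (t • x) = (t ^ (-ρ - 1)) • fderiv ℝ V x := by
  have htx : t • x ≠ 0 := smul_ne_zero ht.ne' hx
  have h1 : HasFDerivAt (fun z => V (t • z))
      ((fderiv ℝ V (t • x)).comp (t • ContinuousLinearMap.id ℝ (EuclideanSpace ℝ (Fin d)))) x :=
    HasFDerivAt.comp x (Vdiff hV htx).hasFDerivAt ((hasFDerivAt_id x).const_smul t)
  have h2 : HasFDerivAt (fun z => t ^ (-ρ) * V z) ((t ^ (-ρ)) • fderiv ℝ V x) x :=
    (Vdiff hV hx).hasFDerivAt.const_mul _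
  have heq : (fun z => t ^ (-ρ) * V z) =ᶠ[nhds x] (fun z => V (t • z)) := by
    filter_upwards [isOpen_compl_singleton.mem_nhds hx] with z hz
    exact (hhom t ht z hz).symm
  have h3 : HasFDerivAt (fun z => V (t • z)) ((t ^ (-ρ)) • fderiv ℝ V x) x :=
    h2.congr_of_eventuallyEq heq.symm
  have h4 := h1.unique h3
  ext v
  have h5 := congrArg (fun L : EuclideanSpace ℝ (Fin d) →L[ℝ] ℝ => L v) h4
  simp only [ContinuousLinearMap.comp_apply, ContinuousLinearMap.smul_apply,
    ContinuousLinearMap.id_apply, smul_eq_mul] at h5 ⊢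
  rw [(fderiv ℝ V (t • x)).map_smul, smul_eq_mul] at h5
  have hts : t ^ (-ρ - 1) = t ^ (-ρ) * t⁻¹ := by
    rw [← Real.rpow_neg_one t, ← Real.rpow_add ht]; ring_nf
  rw [hts]
  field_simp at h5 ⊢
  linarith [h5]

lemma Dbound (hV : ContDiffOn ℝ (⊤ : ℕ∞) V {0}ᶜ)
    (hhom : ∀ t : ℝ, 0 < t → ∀ x : EuclideanSpace ℝ (Fin d), x ≠ 0 →
      V (t • x) = t ^ (-ρ) * V x) :
    ∃ C : ℝ, 0 ≤ C ∧ ∀ x : EuclideanSpace ℝ (Fin d), x ≠ 0 →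
      ‖fderiv ℝ V x‖ ≤ C * ‖x‖ ^ (-ρ - 1) := by
  have hfC : ContinuousOn (fderiv ℝ V) {0}ᶜ :=
    hV.continuousOn_fderiv_of_isOpen isOpen_compl_singleton (by simp)
  obtain ⟨C, hC⟩ := (isCompact_sphere (0 : EuclideanSpace ℝ (Fin d)) 1).exists_bound_of_continuousOn
    (hfC.mono sphere_sub_compl)
  refine ⟨max C 0, le_max_right _ _, fun x hx => ?_⟩
  have hnx : (0:ℝ) < ‖x‖ := norm_pos_iff.2 hx
  set u := ‖x‖⁻¹ • x with hu
  have hun : u ∈ Metric.sphere (0 : EuclideanSpace ℝ (Fin d)) 1 := by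
    rw [mem_sphere_iff_norm, sub_zero, norm_smul]
    simp [abs_of_pos (inv_pos.2 hnx), inv_mul_cancel₀ hnx.ne']
  have hune : u ≠ 0 := fun h => (sphere_sub_compl hun) h
  have hxu : x = ‖x‖ • u := by rw [hu, smul_smul, mul_inv_cancel₀ hnx.ne', one_smul]
  have hDx : fderiv ℝ V x = (‖x‖ ^ (-ρ - 1)) • fderiv ℝ V u := by
    conv_lhs => rw [hxu]
    exact fderiv_scale hV hhom hnx hune
  calc ‖fderiv ℝ V x‖ = ‖x‖ ^ (-ρ - 1) * ‖fderiv ℝ V u‖ := by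
        rw [hDx, norm_smul, Real.norm_eq_abs, abs_of_pos (Real.rpow_pos_of_pos hnx _)]
    _ ≤ ‖x‖ ^ (-ρ - 1) * max C 0 := by
        apply mul_le_mul_of_nonneg_left _ (Real.rpow_pos_of_pos hnx _).le
        exact le_trans (hC u hun) (le_max_left _ _)
    _ = max C 0 * ‖x‖ ^ (-ρ - 1) := mul_comm _ _

open MeasureTheory Set

-- helper: integrability of |t|^p near 0
lemma habs_mid {p : ℝ} (hp : -1 < p) :
    IntegrableOn (fun t : ℝ => |t| ^ p) (Icc (-1 : ℝ) 1) := by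
  have h1 : IntegrableOn (fun t : ℝ => |t| ^ p) (Icc (0 : ℝ) 1) := by
    rw [integrableOn_Icc_iff_integrableOn_Ioc]
    have := (intervalIntegral.intervalIntegrable_rpow' (a := 0) (b := 1) hp).1
    exact this.congr_fun (fun x hx => by rw [abs_of_pos hx.1]) measurableSet_Ioc
  have h2 : IntegrableOn (fun t : ℝ => |t| ^ p) (Icc (-1 : ℝ) 0) := by
    have key := ((Measure.measurePreserving_neg (volume : Measure ℝ)).integrableOn_comp_preimage
      (Homeomorph.neg ℝ).measurableEmbedding).2 h1
    have hpre : (Neg.neg ⁻¹' Icc (0:ℝ) 1 : Set ℝ) = Icc (-1 : ℝ) 0 := by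
      ext x; simp [neg_le, le_neg, and_comm]
    rw [hpre] at key
    exact key.congr_fun (fun x _ => by simp) measurableSet_Icc
  have : Icc (-1 : ℝ) 1 ⊆ Icc (-1 : ℝ) 0 ∪ Icc (0 : ℝ) 1 := by
    intro x hx
    rcases le_total x 0 with h | h
    · exact Or.inl ⟨hx.1, h⟩
    · exact Or.inr ⟨h, hx.2⟩
  exact (h2.union h1).mono_set this

-- helper: integrability of |t|^p in the tails
lemma habs_tail {p : ℝ} (hp : p < -1) :
    IntegrableOn (fun t : ℝ => |t| ^ p) (Iic (-1 : ℝ) ∪ Ici (1 : ℝ)) := by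
  have h1 : IntegrableOn (fun t : ℝ => |t| ^ p) (Ici (1 : ℝ)) := by
    rw [integrableOn_Ici_iff_integrableOn_Ioi]
    have := (integrableOn_Ioi_rpow_iff (t := (1:ℝ)) one_pos).2 hp
    exact this.congr_fun (fun x hx => by rw [abs_of_pos (zero_lt_one.trans hx)]) measurableSet_Ioi
  have h2 : IntegrableOn (fun t : ℝ => |t| ^ p) (Iic (-1 : ℝ)) := by
    have key := ((Measure.measurePreserving_neg (volume : Measure ℝ)).integrableOn_comp_preimage
      (Homeomorph.neg ℝ).measurableEmbedding).2 h1
    have hpre : (Neg.neg ⁻¹' Ici (1:ℝ) : Set ℝ) = Iic (-1 : ℝ) := by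
      ext x; simp [le_neg]
    rw [hpre] at key
    exact key.congr_fun (fun x _ => by simp) measurableSet_Iic
  exact h2.union h1

open MeasureTheory
open scoped RealInnerProductSpace

theorem stmt_11 (d : ℕ) (hd : 3 ≤ d) (ρ : ℝ) (hρ0 : 1/2 < ρ) (hρ1 : ρ < 1)
    (V : EuclideanSpace ℝ (Fin d) → ℝ)
    (hV : ContDiffOn ℝ (⊤ : ℕ∞) V {0}ᶜ)
    (hhom : ∀ t : ℝ, 0 < t → ∀ x : EuclideanSpace ℝ (Fin d), x ≠ 0 →
      V (t • x) = t ^ (-ρ) * V x)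
    (ω y : EuclideanSpace ℝ (Fin d)) (hω : ‖ω‖ = 1) (hyω : ⟪y, ω⟫ = 0) (hy : y ≠ 0) :
    Integrable (fun t : ℝ => V (y + t • ω) - V (t • ω)) := by
  obtain ⟨C0, hC00, hC0⟩ := Vbound hV hhom
  obtain ⟨C1, hC10, hC1⟩ := Dbound hV hhom
  have hωne : ω ≠ 0 := fun h => by simp [h] at hω
  have hny : (0:ℝ) < ‖y‖ := norm_pos_iff.2 hy
  -- geometry
  have hsq : ∀ t s : ℝ, ‖t • ω + s • y‖ ^ 2 = t ^ 2 + s ^ 2 * ‖y‖ ^ 2 := by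
    intro t s
    have hinner : ⟪t • ω, s • y⟫ = 0 := by
      rw [real_inner_smul_left, real_inner_smul_right, real_inner_comm, hyω]; ring
    rw [@norm_add_sq_real, hinner, norm_smul, norm_smul, hω]
    simp [mul_pow, sq_abs]
  have hget : ∀ t s : ℝ, |t| ≤ ‖t • ω + s • y‖ := by
    intro t s
    have h1 : t ^ 2 ≤ ‖t • ω + s • y‖ ^ 2 := by
      rw [hsq]; nlinarith [sq_nonneg (s * ‖y‖)]
    calc |t| = Real.sqrt (t ^ 2) := (Real.sqrt_sq_eq_abs t).symm
      _ ≤ Real.sqrt (‖t • ω + s • y‖ ^ 2) := Real.sqrt_le_sqrt h1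
      _ = ‖t • ω + s • y‖ := Real.sqrt_sq (norm_nonneg _)
  have hgey : ∀ t : ℝ, ‖y‖ ≤ ‖y + t • ω‖ := by
    intro t
    have h0 : y + t • ω = t • ω + (1:ℝ) • y := by rw [one_smul, add_comm]
    have h1 : ‖y‖ ^ 2 ≤ ‖t • ω + (1:ℝ) • y‖ ^ 2 := by
      rw [hsq]; nlinarith [sq_nonneg t]
    rw [h0]
    calc ‖y‖ = Real.sqrt (‖y‖ ^ 2) := (Real.sqrt_sq (norm_nonneg _)).symm
      _ ≤ Real.sqrt (‖t • ω + (1:ℝ) • y‖ ^ 2) := Real.sqrt_le_sqrt h1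
      _ = _ := Real.sqrt_sq (norm_nonneg _)
  have hyne : ∀ t : ℝ, y + t • ω ≠ 0 := by
    intro t h
    have := hgey t
    rw [h, norm_zero] at this
    linarith
  -- MVT bound on tails
  have hMVT : ∀ t : ℝ, t ≠ 0 → |V (y + t • ω) - V (t • ω)| ≤ C1 * ‖y‖ * |t| ^ (-ρ - 1) := by
    intro t ht
    have htpos : (0:ℝ) < |t| := abs_pos.2 ht
    set S := segment ℝ (t • ω) (t • ω + y) with hS
    have hmem : ∀ z ∈ S, ∃ θ : ℝ, z = t • ω + θ • y := by
      intro z hz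
      rw [hS, segment_eq_image'] at hz
      obtain ⟨θ, _, hθ⟩ := hz
      exact ⟨θ, by rw [← hθ, add_sub_cancel_left]⟩
    have hz0 : ∀ z ∈ S, z ≠ 0 := by
      intro z hz h0
      obtain ⟨θ, hθ⟩ := hmem z hz
      have := hget t θ
      rw [← hθ, h0, norm_zero] at this
      linarith
    have hbound : ∀ z ∈ S, ‖fderiv ℝ V z‖ ≤ C1 * |t| ^ (-ρ - 1) := by
      intro z hz
      obtain ⟨θ, hθ⟩ := hmem z hz
      have hzt : |t| ≤ ‖z‖ := hθ ▸ hget t θ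
      calc ‖fderiv ℝ V z‖ ≤ C1 * ‖z‖ ^ (-ρ - 1) := hC1 z (hz0 z hz)
        _ ≤ C1 * |t| ^ (-ρ - 1) := by
            apply mul_le_mul_of_nonneg_left _ hC10
            exact Real.rpow_le_rpow_of_nonpos htpos hzt (by linarith)
    have := (convex_segment (t • ω) (t • ω + y)).norm_image_sub_le_of_norm_fderiv_le
      (fun z hz => Vdiff hV (hz0 z hz)) hbound
      (left_mem_segment ℝ _ _) (right_mem_segment ℝ _ _)
    rw [add_sub_cancel_left] at this
    calc |V (y + t • ω) - V (t • ω)| = ‖V (t • ω + y) - V (t • ω)‖ := by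
          rw [add_comm y (t • ω)]; rfl
      _ ≤ C1 * |t| ^ (-ρ - 1) * ‖y‖ := this
      _ = C1 * ‖y‖ * |t| ^ (-ρ - 1) := by ring
  -- measurability
  have hcont : ContinuousOn (fun t : ℝ => V (y + t • ω) - V (t • ω)) {0}ᶜ := by
    have hc1 : Continuous (fun t : ℝ => y + t • ω) :=
      continuous_const.add (continuous_id.smul continuous_const)
    have hc2 : Continuous (fun t : ℝ => t • ω) := continuous_id.smul continuous_const
    exact ((hV.continuousOn.comp hc1.continuousOn (fun t _ => hyne t)).sub
      (hV.continuousOn.comp hc2.continuousOn (fun t ht => smul_ne_zero ht hωne)))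
  have hmeas : AEStronglyMeasurable (fun t : ℝ => V (y + t • ω) - V (t • ω)) volume := by
    have h := hcont.aestronglyMeasurable (μ := volume) (measurableSet_singleton (0:ℝ)).compl
    have he : ({(0:ℝ)}ᶜ : Set ℝ) =ᵐ[volume] Set.univ := by
      rw [Filter.eventuallyEq_univ]
      refine mem_ae_iff.2 ?_
      simp [Real.volume_singleton]
    rwa [Measure.restrict_congr_set he, Measure.restrict_univ] at h
  -- assemble
  rw [← integrableOn_univ]
  have hcover : (Set.univ : Set ℝ) ⊆ (Set.Iic (-1:ℝ) ∪ Set.Ici (1:ℝ)) ∪ Set.Icc (-1:ℝ) 1 := by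
    intro x _
    rcases le_total x (-1) with h | h
    · exact Or.inl (Or.inl h)
    rcases le_total x 1 with h' | h'
    · exact Or.inr ⟨h, h'⟩
    · exact Or.inl (Or.inr h')
  refine IntegrableOn.mono_set ?_ hcover
  apply IntegrableOn.union
  · -- tails
    apply Integrable.mono' ((habs_tail (p := -ρ - 1) (by linarith)).const_mul (C1 * ‖y‖))
      hmeas.restrict
    filter_upwards [ae_restrict_mem (measurableSet_Iic.union measurableSet_Ici)] with t ht
    have ht0 : t ≠ 0 := by
      rcases ht with h | h
      · simp only [Set.mem_Iic] at h; intro h0; rw [h0] at h; linarith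
      · simp only [Set.mem_Ici] at h; intro h0; rw [h0] at h; linarith
    simpa [Real.norm_eq_abs, mul_assoc] using hMVT t ht0
  · -- middle
    have hdom : IntegrableOn (fun t : ℝ => C0 * ‖y‖ ^ (-ρ) + C0 * |t| ^ (-ρ))
        (Set.Icc (-1:ℝ) 1) := by
      refine Integrable.add ?_ ((habs_mid (by linarith)).const_mul C0)
      exact integrableOn_const measure_Icc_lt_top.ne
    apply Integrable.mono' hdom hmeas.restrict
    have h0ae : ∀ᵐ t : ℝ ∂(volume.restrict (Set.Icc (-1:ℝ) 1)), t ≠ 0 := by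
      refine ae_restrict_of_ae ?_
      refine mem_ae_iff.2 ?_
      have h1 : {x : ℝ | x ≠ 0}ᶜ = {(0:ℝ)} := by ext a; simp
      rw [h1, Real.volume_singleton]
    filter_upwards [h0ae] with t ht0
    have htω : t • ω ≠ 0 := smul_ne_zero ht0 hωne
    have h1 : |V (y + t • ω)| ≤ C0 * ‖y‖ ^ (-ρ) := by
      calc |V (y + t • ω)| ≤ C0 * ‖y + t • ω‖ ^ (-ρ) := hC0 _ (hyne t)
        _ ≤ C0 * ‖y‖ ^ (-ρ) := by
            apply mul_le_mul_of_nonneg_left _ hC00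
            exact Real.rpow_le_rpow_of_nonpos hny (hgey t) (by linarith)
    have h2 : |V (t • ω)| ≤ C0 * |t| ^ (-ρ) := by
      have : ‖t • ω‖ = |t| := by rw [norm_smul, hω, Real.norm_eq_abs, mul_one]
      calc |V (t • ω)| ≤ C0 * ‖t • ω‖ ^ (-ρ) := hC0 _ htω
        _ = C0 * |t| ^ (-ρ) := by rw [this]
    rw [Real.norm_eq_abs]
    calc |V (y + t • ω) - V (t • ω)| ≤ |V (y + t • ω)| + |V (t • ω)| := abs_sub _ _
      _ ≤ C0 * ‖y‖ ^ (-ρ) + C0 * |t| ^ (-ρ) := add_le_add h1 h2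
end
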